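/- arXiv:1907.09470 — 2 statements merged into one kernel-verified Lean document; each statement's English description precedes it below -/
import Mathlib

section
/- Let f : ℝ^d → ℝ, let x ∈ ℝ^d, let θ > 0 be a gradient threshold, and let S_θ = ∑_{i=1}^d 1(|∂f/∂xᵢ(x)| ≥ θ) be the number of nontrivial gradient dimensions. Suppose that for each nontrivial dimension i (i.e., |∂f/∂xᵢ(x)| ≥ θ), the function t ↦ f(x + t·eᵢ) is three times continuously differentiable near 0 with third derivative bounded in absolute value by 6C for some C > 0, and define the estimated gradient ĝ by ĝᵢ = (f(x + δ·eᵢ) − f(x − δ·eᵢ))/(2δ) on nontrivial dimensions i (with 0 < δ within the region of validity of the derivative bound) and ĝᵢ = 0 on trivial dimensions (those with |∂f/∂xᵢ(x)| < θ). Then ‖ĝ − ∇f(x)‖₁ ≤ S_θ · C · δ² + (d − S_θ) · θ. -/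
/-
Taylor's theorem with Lagrange remainder of order three at `x₀ ± δ` gives
`f(x₀ ± δ) = f(x₀) ± δ f'(x₀) + δ² f''(x₀)/2 ± δ³ f'''(ξ±)/6`; in the central difference the
even-order terms cancel, so it differs from `f'(x₀)` by `(f'''(ξ₊) + f'''(ξ₋)) δ²/12`, which is at
most `C δ²` when `|f'''| ≤ 6C`. On a trivial dimension the estimate `0` misses the partial
derivative by less than `θ`; summing over the `S_θ` nontrivial and `d - S_θ` trivial dimensions
gives the bound.
-/

open Set Nat

section IteratedDeriv

variable {𝕜 F : Type*} [NontriviallyNormedField 𝕜] [NormedAddCommGroup F] [NormedSpace 𝕜 F]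

theorem iteratedDerivWithin_subset {f : 𝕜 → F} {s t : Set 𝕜} {x : 𝕜} {n : ℕ} (st : s ⊆ t)
    (hs : UniqueDiffOn 𝕜 s) (ht : UniqueDiffOn 𝕜 t) (hf : ContDiffOn 𝕜 n f t) (hx : x ∈ s) :
    iteratedDerivWithin n f s x = iteratedDerivWithin n f t x := by
  simp only [iteratedDerivWithin, iteratedFDerivWithin_subset st hs ht hf hx]

end IteratedDeriv

theorem taylor_mean_remainder_lagrange_of_subset {f : ℝ → ℝ} {s : Set ℝ} {x x₀ : ℝ} {n : ℕ}
    (hx : x₀ ≠ x) (hs : UniqueDiffOn ℝ s) (hsub : uIcc x₀ x ⊆ s)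
    (hf : ContDiffOn ℝ (n + 1) f s) :
    ∃ x' ∈ uIoo x₀ x, f x - taylorWithinEval f n s x₀ x =
      iteratedDerivWithin (n + 1) f s x' * (x - x₀) ^ (n + 1) / (n + 1)! := by
  have hu : UniqueDiffOn ℝ (uIcc x₀ x) := uniqueDiffOn_uIcc hx
  have hrestrict : ∀ k ≤ n + 1, ∀ y ∈ uIcc x₀ x,
      iteratedDerivWithin k f (uIcc x₀ x) y = iteratedDerivWithin k f s y := fun k hk y hy =>
    iteratedDerivWithin_subset hsub hu hs (hf.of_le (mod_cast hk)) hy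
  have hd : DifferentiableOn ℝ (iteratedDerivWithin n f s) s :=
    hf.differentiableOn_iteratedDerivWithin (mod_cast Nat.lt_succ_self n) hs
  obtain ⟨x', hx', hrem⟩ := taylor_mean_remainder_lagrange hx (hf.mono hsub).of_succ
    ((hd.mono (uIoo_subset_uIcc_self.trans hsub)).congr fun y hy =>
      hrestrict n n.le_succ y (uIoo_subset_uIcc_self hy))
  have htaylor : taylorWithinEval f n (uIcc x₀ x) x₀ x = taylorWithinEval f n s x₀ x := by
    simp only [taylor_within_apply]
    refine Finset.sum_congr rfl fun k hk => ?_
    rw [hrestrict k (by simp at hk; omega) x₀ left_mem_uIcc]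
  refine ⟨x', hx', ?_⟩
  rw [← htaylor, hrem, hrestrict (n + 1) le_rfl x' (uIoo_subset_uIcc_self hx')]

theorem abs_centralDifference_sub_deriv_le {g : ℝ → ℝ} {s : Set ℝ} {x₀ δ M : ℝ} (hδ : 0 < δ)
    (hs : UniqueDiffOn ℝ s) (hsub : Icc (x₀ - δ) (x₀ + δ) ⊆ s) (hg : ContDiffOn ℝ 3 g s)
    (hM : ∀ t ∈ s, |iteratedDerivWithin 3 g s t| ≤ M) :
    |(g (x₀ + δ) - g (x₀ - δ)) / (2 * δ) - deriv g x₀| ≤ M / 6 * δ ^ 2 := by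
  have hderiv : iteratedDerivWithin 1 g s x₀ = deriv g x₀ := by
    rw [iteratedDerivWithin_one, derivWithin_of_mem_nhds
      (Filter.mem_of_superset (Icc_mem_nhds (by linarith) (by linarith)) hsub)]
  have hright : uIcc x₀ (x₀ + δ) ⊆ s :=
    (uIcc_of_le (by linarith)).trans_subset (Icc_subset_Icc (by linarith) le_rfl) |>.trans hsub
  have hleft : uIcc x₀ (x₀ - δ) ⊆ s :=
    (uIcc_of_ge (by linarith)).trans_subset (Icc_subset_Icc le_rfl (by linarith)) |>.trans hsub
  obtain ⟨ξ, hξ, hplus⟩ := taylor_mean_remainder_lagrange_of_subset (n := 2)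
    (by linarith : x₀ ≠ x₀ + δ) hs hright hg
  obtain ⟨η, hη, hminus⟩ := taylor_mean_remainder_lagrange_of_subset (n := 2)
    (by linarith : x₀ ≠ x₀ - δ) hs hleft hg
  simp only [taylor_within_apply, Finset.sum_range_succ, Finset.sum_range_zero, hderiv]
    at hplus hminus
  norm_num [Nat.factorial] at hplus hminus
  set a := iteratedDerivWithin 3 g s ξ
  set b := iteratedDerivWithin 3 g s η
  have hcentral : (g (x₀ + δ) - g (x₀ - δ)) / (2 * δ) - deriv g x₀ = (a + b) / 12 * δ ^ 2 := by
    field_simp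
    linear_combination 12 * (hplus - hminus)
  have ha : |a| ≤ M := hM ξ (hright (uIoo_subset_uIcc_self hξ))
  have hb : |b| ≤ M := hM η (hleft (uIoo_subset_uIcc_self hη))
  calc |(g (x₀ + δ) - g (x₀ - δ)) / (2 * δ) - deriv g x₀| = |a + b| / 12 * δ ^ 2 := by
        rw [hcentral, abs_mul, abs_div, abs_of_nonneg (sq_nonneg δ)]; norm_num
    _ ≤ (M + M) / 12 * δ ^ 2 := by gcongr; exact (abs_add_le a b).trans (add_le_add ha hb)
    _ = M / 6 * δ ^ 2 := by ring

namespace Finset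

theorem sum_le_card_filter_mul_add {ι R : Type*} [CommRing R] [PartialOrder R]
    [IsOrderedRing R] (s : Finset ι) (p : ι → Prop) [DecidablePred p] {u : ι → R} {a b : R}
    (ha : ∀ i ∈ s, p i → u i ≤ a) (hb : ∀ i ∈ s, ¬p i → u i ≤ b) :
    ∑ i ∈ s, u i ≤ #(s.filter p) * a + (#s - #(s.filter p)) * b := by
  have hcard : (#s : R) - #(s.filter p) = #(s.filter fun i => ¬p i) := by
    rw [sub_eq_iff_eq_add', ← Nat.cast_add, card_filter_add_card_filter_not]
  rw [← sum_filter_add_sum_filter_not s p, hcard, ← nsmul_eq_mul, ← nsmul_eq_mul]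
  gcongr
  · exact sum_le_card_nsmul _ _ a fun i hi => ha i (mem_filter.1 hi).1 (mem_filter.1 hi).2
  · exact sum_le_card_nsmul _ _ b fun i hi => hb i (mem_filter.1 hi).1 (mem_filter.1 hi).2

end Finset

open Classical in
theorem stmt_2_general (d : ℕ) (f : (Fin d → ℝ) → ℝ) (x : Fin d → ℝ) (θ C δ δ₀ : ℝ)
    (hδ : 0 < δ) (hδle : δ ≤ δ₀)
    (grad : Fin d → ℝ)
    (hgrad : ∀ i : Fin d, grad i = deriv (fun t : ℝ => f (x + t • (Pi.single i 1 : Fin d → ℝ))) 0)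
    (hf : ∀ i : Fin d, θ ≤ |grad i| →
      ContDiffOn ℝ 3 (fun t : ℝ => f (x + t • (Pi.single i 1 : Fin d → ℝ))) (Set.Icc (-δ₀) δ₀) ∧
      ∀ t ∈ Set.Icc (-δ₀) δ₀,
        |iteratedDerivWithin 3 (fun t : ℝ => f (x + t • (Pi.single i 1 : Fin d → ℝ)))
          (Set.Icc (-δ₀) δ₀) t| ≤ 6 * C)
    (ghat : Fin d → ℝ)
    (hghat : ∀ i : Fin d, ghat i =
      if θ ≤ |grad i| then
        (f (x + δ • (Pi.single i 1 : Fin d → ℝ)) - f (x - δ • (Pi.single i 1 : Fin d → ℝ))) / (2 * δ)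
      else 0)
    (Sθ : ℕ)
    (hS : Sθ = (Finset.univ.filter (fun i : Fin d => θ ≤ |grad i|)).card) :
    ∑ i : Fin d, |ghat i - grad i| ≤ (Sθ : ℝ) * C * δ ^ 2 + ((d : ℝ) - (Sθ : ℝ)) * θ := by
  have hnontrivial (i : Fin d) (hi : θ ≤ |grad i|) : |ghat i - grad i| ≤ C * δ ^ 2 := by
    obtain ⟨hcont, hbound⟩ := hf i hi
    have := abs_centralDifference_sub_deriv_le (x₀ := 0) hδ (uniqueDiffOn_Icc (by linarith))
      (Icc_subset_Icc (by linarith) (by linarith)) hcont hbound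
    rw [hghat i, if_pos hi, hgrad i, sub_eq_add_neg x, ← neg_smul]
    simpa using this
  have htrivial (i : Fin d) (hi : ¬θ ≤ |grad i|) : |ghat i - grad i| ≤ θ := by
    rw [hghat i, if_neg hi, zero_sub, abs_neg]
    exact (not_le.1 hi).le
  calc ∑ i : Fin d, |ghat i - grad i|
      ≤ (Sθ : ℝ) * (C * δ ^ 2) + ((Finset.univ : Finset (Fin d)).card - (Sθ : ℝ)) * θ := by
        rw [hS]
        exact Finset.sum_le_card_filter_mul_add _ _ (fun i _ => hnontrivial i)
          (fun i _ => htrivial i)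
    _ = (Sθ : ℝ) * C * δ ^ 2 + ((d : ℝ) - (Sθ : ℝ)) * θ := by
        rw [Finset.card_univ, Fintype.card_fin, mul_assoc]

open Classical in
/-- SFD gradient estimation error bound (Theorem 2 of the paper). -/
theorem stmt_2 (d : ℕ) (f : (Fin d → ℝ) → ℝ) (x : Fin d → ℝ) (θ C δ δ₀ : ℝ)
    (hθ : 0 < θ) (hC : 0 < C) (hδ : 0 < δ) (hδle : δ ≤ δ₀)
    (grad : Fin d → ℝ)
    (hgrad : ∀ i : Fin d, grad i = deriv (fun t : ℝ => f (x + t • (Pi.single i 1 : Fin d → ℝ))) 0)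
    (hf : ∀ i : Fin d, θ ≤ |grad i| →
      ContDiffOn ℝ 3 (fun t : ℝ => f (x + t • (Pi.single i 1 : Fin d → ℝ))) (Set.Icc (-δ₀) δ₀) ∧
      ∀ t ∈ Set.Icc (-δ₀) δ₀,
        |iteratedDerivWithin 3 (fun t : ℝ => f (x + t • (Pi.single i 1 : Fin d → ℝ)))
          (Set.Icc (-δ₀) δ₀) t| ≤ 6 * C)
    (ghat : Fin d → ℝ)
    (hghat : ∀ i : Fin d, ghat i =
      if θ ≤ |grad i| then
        (f (x + δ • (Pi.single i 1 : Fin d → ℝ)) - f (x - δ • (Pi.single i 1 : Fin d → ℝ))) / (2 * δ)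
      else 0)
    (Sθ : ℕ)
    (hS : Sθ = (Finset.univ.filter (fun i : Fin d => θ ≤ |grad i|)).card) :
    ∑ i : Fin d, |ghat i - grad i| ≤ (Sθ : ℝ) * C * δ ^ 2 + ((d : ℝ) - (Sθ : ℝ)) * θ :=
  stmt_2_general d f x θ C δ δ₀ hδ hδle grad hgrad hf ghat hghat Sθ hS
end

section
/- Let p₁, p₂, p₃, q ∈ [0,1] with p₁ + p₂ + p₃ = 1, let P ∈ [0,1) with p₁ < 1 − P, let n ≥ 1, and let (A_t)_{t≥0}, (B_t)_{t≥0} be sequences of nonnegative reals satisfying A_t = (1 − q)·A_{t−1} + p₃·B_{t−1} and B_t = q·A_{t−1} + p₂·B_{t−1} for all t ≥ 1, with A_t + B_t > 0 for all 0 ≤ t ≤ n−1. Then the overall ratio P_SFD = (∑_{t=1}^n (A_t + B_t)) / (∑_{t=0}^{n−1} (A_t + B_t)) satisfies P_SFD > P. -/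
/-- Lemma 1 of the paper, P_SFD > P_random when p₁ < 1 - P_random. -/
theorem stmt_7 (p₁ p₂ p₃ q P : ℝ)
    (hp₁ : p₁ ∈ Set.Icc (0 : ℝ) 1) (hp₂ : p₂ ∈ Set.Icc (0 : ℝ) 1)
    (hp₃ : p₃ ∈ Set.Icc (0 : ℝ) 1) (hq : q ∈ Set.Icc (0 : ℝ) 1)
    (hsum : p₁ + p₂ + p₃ = 1)
    (hP : P ∈ Set.Ico (0 : ℝ) 1)
    (hp₁P : p₁ < 1 - P)
    (n : ℕ) (hn : 1 ≤ n)
    (A B : ℕ → ℝ) (hA : ∀ t, 0 ≤ A t) (hB : ∀ t, 0 ≤ B t)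
    (hrecA : ∀ t : ℕ, 1 ≤ t → A t = (1 - q) * A (t - 1) + p₃ * B (t - 1))
    (hrecB : ∀ t : ℕ, 1 ≤ t → B t = q * A (t - 1) + p₂ * B (t - 1))
    (hpos : ∀ t : ℕ, t ≤ n - 1 → 0 < A t + B t) :
    P < (∑ t ∈ Finset.Icc 1 n, (A t + B t)) / (∑ t ∈ Finset.range n, (A t + B t)) := by
  have hkey : ∀ t : ℕ, t < n → P * (A t + B t) < A (t + 1) + B (t + 1) := by
    intro t ht
    have hS : 0 < A t + B t := hpos t (by omega)
    have hstep : A (t + 1) + B (t + 1) = A t + (p₂ + p₃) * B t := by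
      rw [hrecA (t + 1) (by omega), hrecB (t + 1) (by omega)]
      simp
      ring
    have h1p : p₂ + p₃ = 1 - p₁ := by linarith
    have hPlt : P < 1 - p₁ := by linarith
    have h1 : (1 - p₁) * (A t + B t) ≤ A t + (p₂ + p₃) * B t := by
      nlinarith [hA t, hB t, hp₁.1, hp₁.2]
    calc P * (A t + B t) < (1 - p₁) * (A t + B t) := by
          exact mul_lt_mul_of_pos_right hPlt hS
      _ ≤ A t + (p₂ + p₃) * B t := h1
      _ = A (t + 1) + B (t + 1) := hstep.symm
  have hden : 0 < ∑ t ∈ Finset.range n, (A t + B t) := by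
    apply Finset.sum_pos' (fun t _ => add_nonneg (hA t) (hB t))
    exact ⟨0, Finset.mem_range.mpr (by omega), hpos 0 (by omega)⟩
  rw [lt_div_iff₀ hden]
  have hre : ∑ t ∈ Finset.Icc 1 n, (A t + B t)
      = ∑ t ∈ Finset.range n, (A (t + 1) + B (t + 1)) := by
    rw [← Finset.Ico_add_one_right_eq_Icc, Finset.sum_Ico_eq_sum_range]
    simp [add_comm]
  rw [hre, Finset.mul_sum]
  exact Finset.sum_lt_sum_of_nonempty (Finset.nonempty_range_iff.mpr (by omega))
    fun t ht => hkey t (Finset.mem_range.mp ht)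
end
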